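/- Let r' : {(x,y) : x > 0} × ℝ → ℝ³ be defined by r'(x,y) = ( (1/√3)(e^y/sinh(√3 x))(sinh²(√3 x) + 3y), −(1/√3) e^{−2y} coth(√3 x), −(1/√3) e^y / sinh(√3 x) ). Then for all x > 0, y ∈ ℝ: det[∂ₓr', ∂ᵧr', ∂ₓᵧr'] = 0, det[∂ₓr', ∂ᵧr', ∂ₓₓr'] = det[∂ₓr', ∂ᵧr', ∂ᵧᵧr'], and |det[∂ₓr', ∂ᵧr', ∂ₓₓr']| = (3/sinh²(√3 x) + 2)². In particular (x,y) are isothermal coordinates for the affine metric, which equals (3 csch²(√3 x) + 2)(dx² + dy²). -/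

import Mathlib

/-- Real hyperbolic cotangent. -/
noncomputable def coth (x : ℝ) : ℝ := Real.cosh x / Real.sinh x

/-- The isothermal parametrization of Hildebrand's case-1 affine sphere. -/
noncomputable def r' (x y : ℝ) : Fin 3 → ℝ :=
  ![ (1 / Real.sqrt 3) * (Real.exp y / Real.sinh (Real.sqrt 3 * x)) *
       ((Real.sinh (Real.sqrt 3 * x)) ^ 2 + 3 * y),
     -(1 / Real.sqrt 3) * Real.exp (-2 * y) * coth (Real.sqrt 3 * x),
     -(1 / Real.sqrt 3) * Real.exp y / Real.sinh (Real.sqrt 3 * x) ]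

/-- `∂ₓ r'`. -/
noncomputable def rx' (x y : ℝ) : Fin 3 → ℝ := fun i => deriv (fun s => r' s y i) x
/-- `∂ᵧ r'`. -/
noncomputable def ry' (x y : ℝ) : Fin 3 → ℝ := fun i => deriv (fun s => r' x s i) y
/-- `∂ₓₓ r'`. -/
noncomputable def rxx' (x y : ℝ) : Fin 3 → ℝ := fun i => deriv (fun s => rx' s y i) x
/-- `∂ₓᵧ r'`. -/
noncomputable def rxy' (x y : ℝ) : Fin 3 → ℝ := fun i => deriv (fun s => rx' x s i) y
/-- `∂ᵧᵧ r'`. -/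
noncomputable def ryy' (x y : ℝ) : Fin 3 → ℝ := fun i => deriv (fun s => ry' x s i) y


/-! With `S = sinh (√3 x)` and `C = cosh (√3 x)`, every first and second partial derivative of
`r'` has an explicit closed form, rational in `S`, `C`, `√3`, `y`, `e^y` and `e^{-2y}`. After
clearing denominators, the three determinants become polynomial identities modulo
`C² - S² = 1`, `(√3)² = 3` and `e^y · e^y · e^{-2y} = 1`. -/

open Real Filter Topology

lemma HasDerivAt.vec3 {f g h : ℝ → ℝ} {f' g' h' x : ℝ} (hf : HasDerivAt f f' x)
    (hg : HasDerivAt g g' x) (hh : HasDerivAt h h' x) :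
    HasDerivAt (fun s => ![f s, g s, h s]) ![f', g', h'] x := by
  refine hasDerivAt_pi.2 fun i => ?_
  fin_cases i <;> assumption

lemma HasDerivAt.deriv_apply {ι : Type*} {f : ℝ → ι → ℝ} {v : ι → ℝ} {x : ℝ}
    (h : HasDerivAt f v x) : (fun i => _root_.deriv (fun s => f s i) x) = v :=
  funext fun i => (hasDerivAt_pi.1 h i).deriv

lemma sinh_mul_ne_zero {a x : ℝ} (ha : a ≠ 0) (hx : x ≠ 0) : sinh (a * x) ≠ 0 := by
  simpa [sinh_eq_zero] using mul_ne_zero ha hx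

lemma hasDerivAt_sinh_const_mul (a x : ℝ) :
    HasDerivAt (fun s => sinh (a * s)) (a * cosh (a * x)) x := by
  simpa [mul_comm] using ((hasDerivAt_id' x).const_mul a).sinh

lemma hasDerivAt_cosh_const_mul (a x : ℝ) :
    HasDerivAt (fun s => cosh (a * s)) (a * sinh (a * x)) x := by
  simpa [mul_comm] using ((hasDerivAt_id' x).const_mul a).cosh

lemma hasDerivAt_r'_x {x : ℝ} (hx : x ≠ 0) (y : ℝ) :
    HasDerivAt (fun s => r' s y)
      ![exp y * cosh (√3 * x) * (1 - 3 * y / sinh (√3 * x) ^ 2),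
        exp (-2 * y) / sinh (√3 * x) ^ 2,
        exp y * cosh (√3 * x) / sinh (√3 * x) ^ 2] x := by
  have hS := hasDerivAt_sinh_const_mul √3 x
  have hC := hasDerivAt_cosh_const_mul √3 x
  have hS0 : sinh (√3 * x) ≠ 0 := sinh_mul_ne_zero (by positivity) hx
  have hpyth := cosh_sq_sub_sinh_sq (√3 * x)
  unfold r' coth
  refine HasDerivAt.vec3 ?_ ?_ ?_
  · refine ((((hasDerivAt_const x (exp y)).div hS hS0).const_mul (1 / √3)).mul
      ((hS.pow 2).add_const (3 * y))).congr_deriv ?_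
    simp only [Pi.div_apply, Pi.pow_apply]
    field_simp
    ring
  · refine ((hC.div hS hS0).const_mul _).congr_deriv ?_
    field_simp
    linear_combination hpyth
  · refine ((hasDerivAt_const x _).div hS hS0).congr_deriv ?_
    field_simp
    ring

lemma hasDerivAt_r'_y (x y : ℝ) :
    HasDerivAt (fun t => r' x t)
      ![exp y * (sinh (√3 * x) ^ 2 + 3 * y + 3) / (√3 * sinh (√3 * x)),
        2 * exp (-2 * y) * cosh (√3 * x) / (√3 * sinh (√3 * x)),
        -exp y / (√3 * sinh (√3 * x))] y := by
  unfold r' coth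
  refine HasDerivAt.vec3 ?_ ?_ ?_
  · refine ((((hasDerivAt_exp y).div_const _).const_mul _).mul
      (((hasDerivAt_id' y).const_mul 3).const_add _)).congr_deriv ?_
    ring
  · refine ((((hasDerivAt_id' y).const_mul (-2)).exp.const_mul _).mul_const _).congr_deriv ?_
    ring
  · refine (((hasDerivAt_exp y).const_mul _).div_const _).congr_deriv ?_
    ring

lemma rx'_eq {x : ℝ} (hx : x ≠ 0) (y : ℝ) :
    rx' x y = ![exp y * cosh (√3 * x) * (1 - 3 * y / sinh (√3 * x) ^ 2),
      exp (-2 * y) / sinh (√3 * x) ^ 2, exp y * cosh (√3 * x) / sinh (√3 * x) ^ 2] :=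
  (hasDerivAt_r'_x hx y).deriv_apply

lemma ry'_eq (x y : ℝ) :
    ry' x y = ![exp y * (sinh (√3 * x) ^ 2 + 3 * y + 3) / (√3 * sinh (√3 * x)),
      2 * exp (-2 * y) * cosh (√3 * x) / (√3 * sinh (√3 * x)),
      -exp y / (√3 * sinh (√3 * x))] :=
  (hasDerivAt_r'_y x y).deriv_apply

lemma hasDerivAt_rx'_x {x : ℝ} (hx : x ≠ 0) (y : ℝ) :
    HasDerivAt (fun s => rx' s y)
      ![√3 * exp y * (sinh (√3 * x) - 3 * y / sinh (√3 * x) +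
          6 * y * cosh (√3 * x) ^ 2 / sinh (√3 * x) ^ 3),
        -2 * √3 * exp (-2 * y) * cosh (√3 * x) / sinh (√3 * x) ^ 3,
        √3 * exp y * (sinh (√3 * x) ^ 2 - 2 * cosh (√3 * x) ^ 2) / sinh (√3 * x) ^ 3] x := by
  have hS := hasDerivAt_sinh_const_mul √3 x
  have hC := hasDerivAt_cosh_const_mul √3 x
  have hS2 : sinh (√3 * x) ^ 2 ≠ 0 := pow_ne_zero 2 (sinh_mul_ne_zero (by positivity) hx)
  have hrx' : (fun s => rx' s y) =ᶠ[𝓝 x] _ :=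
    (eventually_ne_nhds hx).mono fun s hs => rx'_eq hs y
  refine (HasDerivAt.vec3 ?_ ?_ ?_).congr_of_eventuallyEq hrx'
  · refine ((hC.const_mul _).mul
      (((hasDerivAt_const x _).div (hS.pow 2) hS2).const_sub 1)).congr_deriv ?_
    simp only [Pi.div_apply, Pi.pow_apply]
    field_simp
    ring
  · refine ((hasDerivAt_const x _).div (hS.pow 2) hS2).congr_deriv ?_
    simp only [Pi.pow_apply]
    field_simp
    ring
  · refine ((hC.const_mul _).div (hS.pow 2) hS2).congr_deriv ?_
    simp only [Pi.pow_apply]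
    field_simp
    ring

lemma hasDerivAt_rx'_y {x : ℝ} (hx : x ≠ 0) (y : ℝ) :
    HasDerivAt (fun t => rx' x t)
      ![exp y * cosh (√3 * x) * (1 - (3 * y + 3) / sinh (√3 * x) ^ 2),
        -2 * exp (-2 * y) / sinh (√3 * x) ^ 2,
        exp y * cosh (√3 * x) / sinh (√3 * x) ^ 2] y := by
  have hrx' : (fun t => rx' x t) =ᶠ[𝓝 y] _ := Eventually.of_forall fun t => rx'_eq hx t
  refine (HasDerivAt.vec3 ?_ ?_ ?_).congr_of_eventuallyEq hrx'
  · refine (((hasDerivAt_exp y).mul_const _).mul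
      ((((hasDerivAt_id' y).const_mul 3).div_const _).const_sub 1)).congr_deriv ?_
    ring
  · refine (((hasDerivAt_id' y).const_mul (-2)).exp.div_const _).congr_deriv ?_
    ring
  · exact ((hasDerivAt_exp y).mul_const _).div_const _

lemma hasDerivAt_ry'_y (x y : ℝ) :
    HasDerivAt (fun t => ry' x t)
      ![exp y * (sinh (√3 * x) ^ 2 + 3 * y + 6) / (√3 * sinh (√3 * x)),
        -4 * exp (-2 * y) * cosh (√3 * x) / (√3 * sinh (√3 * x)),
        -exp y / (√3 * sinh (√3 * x))] y := by
  have hry' : (fun t => ry' x t) =ᶠ[𝓝 y] _ := Eventually.of_forall fun t => ry'_eq x t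
  refine (HasDerivAt.vec3 ?_ ?_ ?_).congr_of_eventuallyEq hry'
  · refine (((hasDerivAt_exp y).mul
      ((((hasDerivAt_id' y).const_mul 3).const_add _).add_const 3)).div_const _).congr_deriv ?_
    ring
  · refine ((((hasDerivAt_id' y).const_mul (-2)).exp.const_mul 2 |>.mul_const _).div_const
      _).congr_deriv ?_
    ring
  · exact (hasDerivAt_exp y).neg.div_const _

lemma rxx'_eq {x : ℝ} (hx : x ≠ 0) (y : ℝ) :
    rxx' x y = ![√3 * exp y * (sinh (√3 * x) - 3 * y / sinh (√3 * x) +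
          6 * y * cosh (√3 * x) ^ 2 / sinh (√3 * x) ^ 3),
        -2 * √3 * exp (-2 * y) * cosh (√3 * x) / sinh (√3 * x) ^ 3,
        √3 * exp y * (sinh (√3 * x) ^ 2 - 2 * cosh (√3 * x) ^ 2) / sinh (√3 * x) ^ 3] :=
  (hasDerivAt_rx'_x hx y).deriv_apply

lemma rxy'_eq {x : ℝ} (hx : x ≠ 0) (y : ℝ) :
    rxy' x y = ![exp y * cosh (√3 * x) * (1 - (3 * y + 3) / sinh (√3 * x) ^ 2),
        -2 * exp (-2 * y) / sinh (√3 * x) ^ 2, exp y * cosh (√3 * x) / sinh (√3 * x) ^ 2] :=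
  (hasDerivAt_rx'_y hx y).deriv_apply

lemma ryy'_eq (x y : ℝ) :
    ryy' x y = ![exp y * (sinh (√3 * x) ^ 2 + 3 * y + 6) / (√3 * sinh (√3 * x)),
        -4 * exp (-2 * y) * cosh (√3 * x) / (√3 * sinh (√3 * x)),
        -exp y / (√3 * sinh (√3 * x))] :=
  (hasDerivAt_ry'_y x y).deriv_apply

lemma exp_neg_two_mul (y : ℝ) : exp (-2 * y) = (exp y ^ 2)⁻¹ := by
  rw [← exp_nat_mul, ← exp_neg]
  ring_nf

lemma det_rx'_ry'_rxy' {x : ℝ} (hx : x ≠ 0) (y : ℝ) :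
    (Matrix.of ![rx' x y, ry' x y, rxy' x y]).det = 0 := by
  have hS0 : sinh (√3 * x) ≠ 0 := sinh_mul_ne_zero (by positivity) hx
  have hpyth := cosh_sq_sub_sinh_sq (√3 * x)
  rw [rx'_eq hx, ry'_eq, rxy'_eq hx, Matrix.det_fin_three]
  simp only [Matrix.of_apply, Matrix.cons_val, exp_neg_two_mul]
  field_simp
  linear_combination (6 * cosh (√3 * x)) * hpyth

lemma det_rx'_ry'_rxx' {x : ℝ} (hx : x ≠ 0) (y : ℝ) :
    (Matrix.of ![rx' x y, ry' x y, rxx' x y]).det = -(3 / sinh (√3 * x) ^ 2 + 2) ^ 2 := by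
  have hS0 : sinh (√3 * x) ≠ 0 := sinh_mul_ne_zero (by positivity) hx
  have hpyth := cosh_sq_sub_sinh_sq (√3 * x)
  rw [rx'_eq hx, ry'_eq, rxx'_eq hx, Matrix.det_fin_three]
  simp only [Matrix.of_apply, Matrix.cons_val, exp_neg_two_mul]
  field_simp
  linear_combination
    (-2 * sinh (√3 * x) ^ 2 * (3 + 2 * cosh (√3 * x) ^ 2 + 2 * sinh (√3 * x) ^ 2)) * hpyth

lemma det_rx'_ry'_ryy' {x : ℝ} (hx : x ≠ 0) (y : ℝ) :
    (Matrix.of ![rx' x y, ry' x y, ryy' x y]).det = -(3 / sinh (√3 * x) ^ 2 + 2) ^ 2 := by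
  have hS0 : sinh (√3 * x) ≠ 0 := sinh_mul_ne_zero (by positivity) hx
  have hpyth := cosh_sq_sub_sinh_sq (√3 * x)
  have hsqrt3 : √3 ^ 2 = 3 := sq_sqrt zero_le_three
  rw [rx'_eq hx, ry'_eq, ryy'_eq, Matrix.det_fin_three]
  simp only [Matrix.of_apply, Matrix.cons_val, exp_neg_two_mul]
  field_simp
  linear_combination (-24 - 12 * sinh (√3 * x) ^ 2) * hpyth +
    (9 + 12 * sinh (√3 * x) ^ 2 + 4 * sinh (√3 * x) ^ 4) * hsqrt3

/-- `(x,y)` are isothermal coordinates for the affine metric of `r'`, which equals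
`(3 csch²(√3 x) + 2)(dx² + dy²)`. -/
theorem isothermal_coordinates_case1 :
    ∀ x : ℝ, 0 < x → ∀ y : ℝ,
      Matrix.det (Matrix.of ![rx' x y, ry' x y, rxy' x y]) = 0 ∧
      Matrix.det (Matrix.of ![rx' x y, ry' x y, rxx' x y]) =
        Matrix.det (Matrix.of ![rx' x y, ry' x y, ryy' x y]) ∧
      |Matrix.det (Matrix.of ![rx' x y, ry' x y, rxx' x y])| =
        (3 / (Real.sinh (Real.sqrt 3 * x)) ^ 2 + 2) ^ 2 := by
  intro x hx y
  rw [det_rx'_ry'_rxy' hx.ne', det_rx'_ry'_rxx' hx.ne', det_rx'_ry'_ryy' hx.ne', abs_neg,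
    abs_of_nonneg (sq_nonneg _)]
  exact ⟨rfl, rfl, rfl⟩
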